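/- With m = n−1 (shape (2^{n−1},1), N = 2n−1), the image of η is contained in the image of φ: im(η) ⊆ im(φ). -/

import Mathlib

open Finset

/-- Number of inversions of a list. -/
def invCount {α : Type*} [LinearOrder α] (l : List α) : ℕ :=
  (Finset.univ.filter
    (fun p : Fin l.length × Fin l.length => p.1 < p.2 ∧ l.get p.2 < l.get p.1)).card

/-- The sign `(-1)^(number of inversions)` of the permutation sorting a list
with pairwise distinct entries into increasing order. -/
noncomputable def invSign {α : Type*} [LinearOrder α] (l : List α) : ℂ :=
  (-1) ^ invCount l

/-- Replace the entry `a` by `b` (in place) in a list. -/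
def replaceOne {α : Type*} [DecidableEq α] (l : List α) (a b : α) : List α :=
  l.map fun z => if z = a then b else z

open scoped Classical in
/-- Dirac delta: the basis vector corresponding to an index `r`. -/
noncomputable def delta {β : Type*} (r : β) : β → ℂ := fun r' => if r' = r then 1 else 0

/-- Index for the basis of ordered column tabloids of shape `(2^m, 1^{n-m})` on
`{1, …, n+m}` (identified with `Fin (n+m)`): such a tabloid is recorded by the
set `T` of entries of its first column (the second column is the complement). -/
abbrev Col (n m : ℕ) := {T : Finset (Fin (n + m)) // T.card = n}

/-- The space `M̃` of column tabloids of shape `(2^m, 1^{n-m})`. -/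
abbrev Mt (n m : ℕ) := Col n m → ℂ

lemma card_compl' {n m : ℕ} (T : Col n m) : (T.1ᶜ).card = m := by
  rw [Finset.card_compl, T.2, Fintype.card_fin]
  omega

/-- `yel T j` is the `(j+1)`-st smallest element of the complement of `T`
(i.e. of the second column). -/
noncomputable def yel {n m : ℕ} (T : Col n m) (j : Fin m) : Fin (n + m) :=
  (T.1ᶜ).orderEmbOfFin (card_compl' T) j

lemma yel_not_mem {n m : ℕ} (T : Col n m) (j : Fin m) : yel T j ∉ T.1 :=
  Finset.mem_compl.mp (Finset.orderEmbOfFin_mem (T.1ᶜ) (card_compl' T) j)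

/-- The first column obtained from `T` after exchanging `x ∈ T` with the
`(j+1)`-st smallest element of the complement. -/
noncomputable def swapSet {n m : ℕ} (T : Col n m) (x : Fin (n + m)) (j : Fin m) :
    Finset (Fin (n + m)) :=
  insert (yel T j) (T.1.erase x)

lemma swapSet_card {n m : ℕ} (T : Col n m) {x : Fin (n + m)} (hx : x ∈ T.1) (j : Fin m) :
    (swapSet T x j).card = n := by
  have h0 : 0 < n := T.2 ▸ Finset.card_pos.mpr ⟨x, hx⟩
  rw [swapSet, Finset.card_insert_of_notMem
      (fun h => yel_not_mem T j (Finset.mem_of_mem_erase h)),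
    Finset.card_erase_of_mem hx, T.2]
  omega

/-- `swap_{x,j}(T)`: the signed basis vector obtained from `T` by exchanging
`x` (in the first column) with the `(j+1)`-st entry of the second column in
place, the sign `ε` being the product of the signs of the two permutations
re-sorting the two columns. -/
noncomputable def swapTerm {n m : ℕ} (T : Col n m) (x : {a // a ∈ T.1}) (j : Fin m) :
    Mt n m :=
  (invSign (replaceOne (T.1.sort (· ≤ ·)) x.1 (yel T j)) *
      invSign (replaceOne ((T.1ᶜ).sort (· ≤ ·)) (yel T j) x.1)) •
    delta (⟨swapSet T x.1 j, swapSet_card T x.2 j⟩ : Col n m)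

/-- The operator `η` on the basis vector `v_T`. -/
noncomputable def etaBasis {n m : ℕ} (T : Col n m) : Mt n m :=
  (m : ℂ) • delta T - ∑ j : Fin m, ∑ x ∈ T.1.attach, swapTerm T x j

/-- The operator `η : M̃ → M̃`, extended linearly from the basis. -/
noncomputable def etaFun {n m : ℕ} (f : Mt n m) : Mt n m :=
  ∑ T : Col n m, f T • etaBasis T

/-- `η` as a linear map. -/
noncomputable def etaLin (n m : ℕ) : Mt n m →ₗ[ℂ] Mt n m where
  toFun := etaFun
  map_add' f g := by
    simp [etaFun, add_smul, Finset.sum_add_distrib]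
  map_smul' c f := by
    simp [etaFun, Finset.smul_sum, smul_smul]

/-- The sign picked up when re-sorting the two columns after relabelling by `σ`. -/
noncomputable def actSign {n m : ℕ} (σ : Equiv.Perm (Fin (n + m))) (T : Col n m) : ℂ :=
  invSign ((T.1.sort (· ≤ ·)).map ⇑σ) * invSign (((T.1ᶜ).sort (· ≤ ·)).map ⇑σ)

lemma image_card {n m : ℕ} (σ : Equiv.Perm (Fin (n + m))) (T : Col n m) :
    (T.1.image ⇑σ).card = n := by
  rw [Finset.card_image_of_injective _ σ.injective, T.2]

/-- The (signed) action of `S_{n+m}` on the space of column tabloids: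
`σ • v_T = sgn(sort₁) sgn(sort₂) v_{σ(T)}`, extended linearly. -/
noncomputable def act {n m : ℕ} (σ : Equiv.Perm (Fin (n + m))) (f : Mt n m) : Mt n m :=
  ∑ T : Col n m, f T •
    (actSign σ T • delta (⟨T.1.image ⇑σ, image_card σ T⟩ : Col n m))

section SpechtSide

variable (γ : Type*) [Fintype γ] [DecidableEq γ] (p q : ℕ)

/-- A bijective Young tableau of the two-column shape with column lengths
`p` (first column) and `q` (second column), with entries in `γ`:
a bijection from the cells to the entries. -/
abbrev Tabl := (Fin p ⊕ Fin q) ≃ γ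

/-- `rows` is a row tabloid of shape `(2^q, 1^{p-q})`: the first `q` rows are
unordered pairs, the remaining rows singletons, all pairwise disjoint
(together they then necessarily partition `γ`). -/
def IsRowTab (rows : Fin p → Finset γ) : Prop :=
  (∀ i, (rows i).card = if (i : ℕ) < q then 2 else 1) ∧
  ∀ i j, i ≠ j → Disjoint (rows i) (rows j)

/-- Row tabloids of shape `(2^q, 1^{p-q})`. -/
abbrev RowTab := {rows : Fin p → Finset γ // IsRowTab γ p q rows}

/-- The permutation module `M^{(2^q,1^{p-q})}`, with basis the row tabloids. -/
abbrev MP := RowTab γ p q → ℂ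

variable {γ p q}

/-- The rows of a tableau. -/
def rowsOf (t : Tabl γ p q) : Fin p → Finset γ := fun i =>
  if h : (i : ℕ) < q then {t (Sum.inl i), t (Sum.inr ⟨(i : ℕ), h⟩)}
  else {t (Sum.inl i)}

lemma mem_rowsOf {t : Tabl γ p q} {i : Fin p} {a : γ} (ha : a ∈ rowsOf t i) :
    a = t (Sum.inl i) ∨ ∃ h : (i : ℕ) < q, a = t (Sum.inr ⟨(i : ℕ), h⟩) := by
  unfold rowsOf at ha
  split_ifs at ha with h
  · rcases Finset.mem_insert.mp ha with h1 | h1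
    · exact Or.inl h1
    · exact Or.inr ⟨h, Finset.mem_singleton.mp h1⟩
  · exact Or.inl (Finset.mem_singleton.mp ha)

lemma isRowTab_rowsOf (t : Tabl γ p q) : IsRowTab γ p q (rowsOf t) := by
  constructor
  · intro i
    by_cases h : (i : ℕ) < q
    · rw [rowsOf, dif_pos h, if_pos h]
      exact Finset.card_pair (t.injective.ne (by simp))
    · rw [rowsOf, dif_neg h, if_neg h]
      exact Finset.card_singleton _
  · intro i j hij
    rw [Finset.disjoint_left]
    intro a ha hb
    rcases mem_rowsOf ha with h1 | ⟨hi, h1⟩ <;> rcases mem_rowsOf hb with h2 | ⟨hj, h2⟩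
    · exact hij (Sum.inl.inj (t.injective (h1.symm.trans h2)))
    · exact Sum.inl_ne_inr (t.injective (h1.symm.trans h2))
    · exact Sum.inr_ne_inl (t.injective (h1.symm.trans h2))
    · refine hij (Fin.ext ?_)
      have h3 := Sum.inr.inj (t.injective (h1.symm.trans h2))
      simpa using congrArg Fin.val h3

/-- The row tabloid `{t}` of a tableau `t`. -/
def rowTabOf (t : Tabl γ p q) : RowTab γ p q := ⟨rowsOf t, isRowTab_rowsOf t⟩

/-- The column stabilizer `C_t` of a tableau: permutations preserving each
column setwise. -/
def colStab (t : Tabl γ p q) : Finset (Equiv.Perm γ) :=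
  Finset.univ.filter fun σ =>
    (∀ i : Fin p, ∃ i' : Fin p, σ (t (Sum.inl i)) = t (Sum.inl i')) ∧
    (∀ j : Fin q, ∃ j' : Fin q, σ (t (Sum.inr j)) = t (Sum.inr j'))

/-- The polytabloid `ε_t = ∑_{β ∈ C_t} sgn(β) {β t}`. -/
noncomputable def polytab (t : Tabl γ p q) : MP γ p q :=
  ∑ σ ∈ colStab t, ((Equiv.Perm.sign σ : ℤ) : ℂ) • delta (rowTabOf (t.trans σ))

variable (γ p q) in
/-- The Specht module `S^{(2^q,1^{p-q})}`: the span of all polytabloids. -/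
noncomputable def SpechtMod : Submodule ℂ (MP γ p q) :=
  Submodule.span ℂ (Set.range (polytab (γ := γ) (p := p) (q := q)))

/-- The entrywise action of a permutation on a row tabloid. -/
def rowAct (σ : Equiv.Perm γ) (r : RowTab γ p q) : RowTab γ p q :=
  ⟨fun i => (r.1 i).image ⇑σ, by
    obtain ⟨h1, h2⟩ := r.2
    refine ⟨fun i => ?_, fun i j hij => ?_⟩
    · rw [Finset.card_image_of_injective _ σ.injective]; exact h1 i
    · exact (Finset.disjoint_image σ.injective).mpr (h2 i j hij)⟩

/-- The entrywise `S_N`-action on the permutation module. -/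
noncomputable def actP (σ : Equiv.Perm γ) (f : MP γ p q) : MP γ p q :=
  fun r => f (rowAct σ⁻¹ r)

end SpechtSide

/-- The tableau `t(T)` whose first column is `T` in increasing order and whose
second column is the complement of `T` in increasing order. -/
noncomputable def tabOf {n m : ℕ} (T : Col n m) : Tabl (Fin (n + m)) n m :=
  Equiv.ofBijective
    (Sum.elim (fun i => T.1.orderEmbOfFin T.2 i)
      (fun j => (T.1ᶜ).orderEmbOfFin (card_compl' T) j))
    (by
      rw [Fintype.bijective_iff_injective_and_card]
      refine ⟨?_, by simp⟩
      rintro (i | i) (j | j) h <;> simp only [Sum.elim_inl, Sum.elim_inr] at h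
      · exact congrArg Sum.inl ((T.1.orderEmbOfFin T.2).injective h)
      · have h1 := Finset.orderEmbOfFin_mem T.1 T.2 i
        have h2 := Finset.orderEmbOfFin_mem (T.1ᶜ) (card_compl' T) j
        rw [h] at h1
        simp only [Finset.mem_compl] at h2
        exact absurd h1 h2
      · have h1 := Finset.orderEmbOfFin_mem T.1 T.2 j
        have h2 := Finset.orderEmbOfFin_mem (T.1ᶜ) (card_compl' T) i
        rw [← h] at h1
        simp only [Finset.mem_compl] at h2
        exact absurd h1 h2
      · exact congrArg Sum.inr (((T.1ᶜ).orderEmbOfFin (card_compl' T)).injective h))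

/-- The `S_N`-equivariant map `α : M̃ → M^{(2^m,1^{n-m})}`, sending `v_T` to the
polytabloid `ε_{t(T)}` (its image is the Specht module). -/
noncomputable def alphaLin (n m : ℕ) : Mt n m →ₗ[ℂ] MP (Fin (n + m)) n m where
  toFun f := ∑ T : Col n m, f T • polytab (tabOf T)
  map_add' f g := by simp [add_smul, Finset.sum_add_distrib]
  map_smul' c f := by simp [Finset.smul_sum, smul_smul]

/-- `φ(v_T)`, encoding the generalized Jacobi identity (for shape `(2^{n-1},1)`,
i.e. `n = m + 1`):
`φ(v_T) = v_T − ∑_{i=1}^n (−1)^{n−i} sgn(c_i) v_{Tᶜ ∪ {x_i}}` where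
`x_i` is the `i`-th smallest element of `T` and `c_i` sorts `(y_1,…,y_{n−1},x_i)`. -/
noncomputable def phiBasis {n m : ℕ} (h : n = m + 1) (T : Col n m) : Mt n m :=
  delta T - ∑ i : Fin n,
    ((-1 : ℂ) ^ (n - 1 - (i : ℕ)) *
        invSign ((T.1ᶜ).sort (· ≤ ·) ++ [T.1.orderEmbOfFin T.2 i])) •
      delta (⟨insert (T.1.orderEmbOfFin T.2 i) T.1ᶜ, by
        rw [Finset.card_insert_of_notMem (by
            simpa using Finset.orderEmbOfFin_mem T.1 T.2 i),
          card_compl']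
        omega⟩ : Col n m)

/-- The map `φ : M̃ → M̃`, extended linearly; `ker φ ≅ ρ_{n,3}`. -/
noncomputable def phiFun {n m : ℕ} (h : n = m + 1) (f : Mt n m) : Mt n m :=
  ∑ T : Col n m, f T • phiBasis h T

/-- `φ` as a linear map. -/
noncomputable def phiLin (n m : ℕ) (h : n = m + 1) : Mt n m →ₗ[ℂ] Mt n m where
  toFun := phiFun h
  map_add' f g := by simp [phiFun, add_smul, Finset.sum_add_distrib]
  map_smul' c f := by simp [phiFun, Finset.smul_sum, smul_smul]

/-!
Counting inversions, every sign in `η` and `φ` collapses to a factor `(-1)^x` per moved entry `x`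
(entries counted from `0`; for `φ` this uses that `N = 2n - 1` is odd). In the basis `v_A`:
`φ v_A = v_A - ∑_{x ∈ A} (-1)^x v_{Aᶜ ∪ {x}}` and
`η v_A = (n - 1) v_A + ∑_{x ∈ A, y ∉ A} (-1)^(x+y) v_{A - x + y}`.
Expanding `φ (φ v_A)` returns the double sum of `η` together with `n v_A`, so `η = φ ∘ (φ - 2)`.
-/

lemma List.sum_map_ite_eq_countP {α : Type*} (p : α → Prop) [DecidablePred p] (l : List α) :
    (l.map fun x => if p x then 1 else 0).sum = l.countP (p ·) := by
  induction l with
  | nil => rfl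
  | cons a l ih => by_cases h : p a <;> simp [ih, h, add_comm]

lemma Finset.countP_sort {α : Type*} [LinearOrder α] (s : Finset α) (p : α → Prop)
    [DecidablePred p] : (s.sort (· ≤ ·)).countP (p ·) = #{t ∈ s | p t} := by
  rw [← Multiset.coe_countP, Finset.sort_eq, Multiset.countP_eq_card_filter]
  rfl

lemma Finset.sum_orderEmbOfFin {α M : Type*} [LinearOrder α] [AddCommMonoid M] (s : Finset α)
    {k : ℕ} (hs : #s = k) (f : α → M) : ∑ i, f (s.orderEmbOfFin hs i) = ∑ x ∈ s, f x := by
  conv_rhs => rw [← s.map_orderEmbOfFin_univ hs, Finset.sum_map]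
  rfl

lemma replaceOne_eq_self {α : Type*} [DecidableEq α] {l : List α} {x : α} (hx : x ∉ l) (y : α) :
    replaceOne l x y = l :=
  (List.map_congr_left fun z hz => if_neg fun (h : z = x) => hx (h ▸ hz)).trans (List.map_id _)

section InversionCount

variable {α : Type*} [LinearOrder α]

lemma invCount_cons (a : α) (l : List α) :
    invCount (a :: l) = l.countP (· < a) + invCount l := by
  simp only [invCount, Finset.card_filter, Fintype.sum_prod_type]
  change (∑ i : Fin (l.length + 1), ∑ j : Fin (l.length + 1),
    if i < j ∧ (a :: l).get j < (a :: l).get i then 1 else 0) = _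
  simp only [Fin.sum_univ_succ, Fin.succ_pos, Fin.succ_lt_succ_iff, Fin.not_lt_zero, false_and,
    if_false, true_and, zero_add, List.get_eq_getElem]
  congr 1
  exact (Fin.sum_univ_fun_getElem l (fun x => if x < a then 1 else 0)).trans
    (List.sum_map_ite_eq_countP _ l)

lemma invCount_eq_zero_of_pairwise {l : List α} (hl : l.Pairwise (· ≤ ·)) : invCount l = 0 := by
  induction l with
  | nil => rfl
  | cons a l ih =>
    rw [List.pairwise_cons] at hl
    rw [invCount_cons, ih hl.2, add_zero, List.countP_eq_zero]
    simpa using hl.1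

lemma invCount_append_singleton_of_pairwise {l : List α} (hl : l.Pairwise (· ≤ ·)) (x : α) :
    invCount (l ++ [x]) = l.countP (x < ·) := by
  induction l with
  | nil => rfl
  | cons a l ih =>
    rw [List.pairwise_cons] at hl
    have hnone : l.countP (· < a) = 0 := List.countP_eq_zero.2 (by simpa using hl.1)
    rw [List.cons_append, invCount_cons, ih hl.2, List.countP_append, hnone, List.countP_cons]
    by_cases hxa : x < a <;> simp [hxa, add_comm]

lemma countP_replaceOne_lt [DecidableEq α] {l : List α} (hl : l.Nodup) {a x : α} (hx : x ∈ l)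
    (ha : ∀ t ∈ l, a < t) (y : α) :
    (replaceOne l x y).countP (· < a) = if y < a then 1 else 0 := by
  rw [replaceOne, List.countP_map]
  rw [List.countP_congr (q := fun t => decide (t = x ∧ y < a)) fun t ht => by
    by_cases htx : t = x <;> simp [htx, (ha t ht).not_gt]]
  by_cases hya : y < a
  · rw [if_pos hya, ← List.count_eq_one_of_mem hl hx, List.count]
    exact List.countP_congr fun t _ => by simp [hya]
  · simp [hya]

lemma invCount_replaceOne_of_pairwise [DecidableEq α] {l : List α} (hl : l.Pairwise (· < ·))
    {x : α} (hx : x ∈ l) (y : α) :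
    invCount (replaceOne l x y) = l.countP (fun t => x < t ∧ t < y ∨ y < t ∧ t < x) := by
  induction l with
  | nil => simp at hx
  | cons a l ih =>
    rw [List.pairwise_cons] at hl
    have hcons : replaceOne (a :: l) x y = (if a = x then y else a) :: replaceOne l x y := rfl
    rw [hcons, invCount_cons, List.countP_cons]
    by_cases hax : a = x
    · subst hax
      rw [if_pos rfl, replaceOne_eq_self (fun h => lt_irrefl a (hl.1 a h)),
        invCount_eq_zero_of_pairwise (hl.2.imp le_of_lt), if_neg (by simp), add_zero]
      exact List.countP_congr fun t ht => by simp [hl.1 t ht, (hl.1 t ht).not_gt]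
    · have hxl : x ∈ l := (List.mem_cons.1 hx).resolve_left (Ne.symm hax)
      have hax' : a < x := hl.1 x hxl
      rw [if_neg hax, ih hl.2 hxl, add_comm, countP_replaceOne_lt hl.2.nodup hxl hl.1]
      simp [hax', hax'.not_gt]

lemma invCount_sort_append_singleton (s : Finset α) (x : α) :
    invCount (s.sort (· ≤ ·) ++ [x]) = #{t ∈ s | x < t} := by
  rw [invCount_append_singleton_of_pairwise (s.pairwise_sort _), Finset.countP_sort]

lemma invCount_replaceOne_sort [DecidableEq α] (s : Finset α) {x : α} (hx : x ∈ s) (y : α) :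
    invCount (replaceOne (s.sort (· ≤ ·)) x y) = #{t ∈ s | x < t ∧ t < y ∨ y < t ∧ t < x} := by
  rw [invCount_replaceOne_of_pairwise s.sortedLT_sort.pairwise ((s.mem_sort _).2 hx),
    Finset.countP_sort]

lemma card_filter_orderEmbOfFin_lt (s : Finset α) {k : ℕ} (hs : #s = k) (i : Fin k) :
    #{t ∈ s | s.orderEmbOfFin hs i < t} = k - 1 - i := by
  rw [← Fin.card_Ioi, ← Finset.card_map (s.orderEmbOfFin hs).toEmbedding]
  congr 1
  ext t
  simp only [Finset.mem_filter, Finset.mem_map, Finset.mem_Ioi, RelEmbedding.coe_toEmbedding]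
  constructor
  · rintro ⟨ht, hit⟩
    obtain ⟨j, rfl⟩ : t ∈ Set.range (s.orderEmbOfFin hs) := by
      rwa [Finset.range_orderEmbOfFin]
    exact ⟨j, (s.orderEmbOfFin hs).lt_iff_lt.1 hit, rfl⟩
  · rintro ⟨j, hij, rfl⟩
    exact ⟨s.orderEmbOfFin_mem hs j, (s.orderEmbOfFin hs).lt_iff_lt.2 hij⟩

end InversionCount

section SignsInFin

variable {N : ℕ}

lemma card_filter_add_card_filter_compl (s : Finset (Fin N)) (p : Fin N → Prop)
    [DecidablePred p] : #{t ∈ s | p t} + #{t ∈ sᶜ | p t} = #{t | p t} := by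
  simp only [Finset.card_filter]
  exact Finset.sum_add_sum_compl s _

lemma neg_one_pow_mul_invSign_sort_compl_append (hN : Odd N) (s : Finset (Fin N)) {k : ℕ}
    (hs : #s = k) (i : Fin k) :
    (-1 : ℂ) ^ (k - 1 - i) * invSign (sᶜ.sort (· ≤ ·) ++ [s.orderEmbOfFin hs i])
      = (-1) ^ (s.orderEmbOfFin hs i : ℕ) := by
  set x := s.orderEmbOfFin hs i
  -- `k - 1 - i` counts the entries of `s` above `x`, the inversions those of `sᶜ`.
  have hcount := card_filter_add_card_filter_compl s (x < ·)
  rw [card_filter_orderEmbOfFin_lt, Finset.filter_lt_eq_Ioi, Fin.card_Ioi] at hcount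
  rw [invSign, invCount_sort_append_singleton, ← pow_add, neg_one_pow_eq_pow_mod_two,
    neg_one_pow_eq_pow_mod_two (x : ℕ)]
  obtain ⟨r, rfl⟩ := hN
  have := x.isLt
  congr 1
  omega

lemma invSign_replaceOne_mul_invSign_replaceOne (s : Finset (Fin N)) {x y : Fin N}
    (hx : x ∈ s) (hy : y ∉ s) :
    invSign (replaceOne (s.sort (· ≤ ·)) x y) * invSign (replaceOne (sᶜ.sort (· ≤ ·)) y x)
      = -(-1 : ℂ) ^ ((x : ℕ) + y) := by
  have hxy : (x : ℕ) ≠ y := fun h => hy (Fin.ext h ▸ hx)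
  have hbetween : #{t : Fin N | x < t ∧ t < y ∨ y < t ∧ t < x} = (y - x - 1) + (x - y - 1) := by
    rw [Finset.filter_or, Finset.card_union_of_disjoint, Finset.filter_lt_lt_eq_Ioo,
      Finset.filter_lt_lt_eq_Ioo, Fin.card_Ioo, Fin.card_Ioo]
    exact Finset.disjoint_filter.2 fun t _ h h' => (h.1.trans h.2).not_gt (h'.1.trans h'.2)
  have hcount := card_filter_add_card_filter_compl s (fun t => x < t ∧ t < y ∨ y < t ∧ t < x)
  have hsymm : ∀ t : Fin N, (y < t ∧ t < x ∨ x < t ∧ t < y) ↔ (x < t ∧ t < y ∨ y < t ∧ t < x) :=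
    fun t => or_comm
  rw [invSign, invSign, invCount_replaceOne_sort s hx,
    invCount_replaceOne_sort sᶜ (Finset.mem_compl.2 hy), Finset.filter_congr fun t _ => hsymm t,
    ← pow_add, hcount, hbetween, neg_one_pow_eq_pow_mod_two,
    show (y - x - 1 + (x - y - 1) : ℕ) % 2 = ((x : ℕ) + y + 1) % 2 by omega,
    ← neg_one_pow_eq_pow_mod_two, pow_succ, mul_neg_one]

end SignsInFin

section Operators

variable {n m : ℕ}

/-- `v_A`, indexed by the bare first column so that no cardinality proof is carried along;
it vanishes unless `#A = n`. -/
def basisVec (A : Finset (Fin (n + m))) : Mt n m := fun R => if R.1 = A then 1 else 0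

lemma delta_eq_basisVec (R : Col n m) : delta R = basisVec R.1 := by
  funext R'
  simp [delta, basisVec, Subtype.ext_iff]

lemma basisVec_eq_single (R : Col n m) : basisVec R.1 = Pi.single R 1 := by
  funext R'
  simp [basisVec, Pi.single_apply, Subtype.ext_iff]

lemma etaLin_basisVec (T : Col n m) : etaLin n m (basisVec T.1) = etaBasis T := by
  rw [basisVec_eq_single]
  change etaFun (Pi.single T 1) = _
  simp [etaFun, Pi.single_apply]

lemma etaBasis_eq_sum (T : Col n m) :
    etaBasis T = (m : ℂ) • basisVec T.1 + ∑ x ∈ T.1, ∑ y ∈ T.1ᶜ,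
      (-1 : ℂ) ^ ((x : ℕ) + y) • basisVec (insert y (T.1.erase x)) := by
  have hswap : ∀ j (x : {a // a ∈ T.1}), swapTerm T x j
      = -((-1 : ℂ) ^ ((x : ℕ) + yel T j) • basisVec (insert (yel T j) (T.1.erase x))) := by
    intro j x
    rw [swapTerm, invSign_replaceOne_mul_invSign_replaceOne T.1 x.2 (yel_not_mem T j),
      delta_eq_basisVec, neg_smul]
    rfl
  simp only [etaBasis, hswap, Finset.sum_neg_distrib, sub_neg_eq_add, delta_eq_basisVec]
  rw [Finset.sum_comm, Finset.sum_attach T.1 (fun x => ∑ j, (-1 : ℂ) ^ ((x : ℕ) + yel T j) •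
    basisVec (insert (yel T j) (T.1.erase x)))]
  congr 1
  exact Finset.sum_congr rfl fun x _ => Finset.sum_orderEmbOfFin _ _
    fun y : Fin (n + m) => (-1 : ℂ) ^ ((x : ℕ) + y) • basisVec (insert y (T.1.erase x))

def phiVec (A : Finset (Fin (n + m))) : Mt n m :=
  basisVec A - ∑ x ∈ A, (-1 : ℂ) ^ (x : ℕ) • basisVec (insert x Aᶜ)

lemma phiBasis_eq_phiVec (h : n = m + 1) (T : Col n m) : phiBasis h T = phiVec T.1 := by
  have hodd : Odd (n + m) := ⟨m, by omega⟩
  simp only [phiBasis, phiVec, delta_eq_basisVec,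
    neg_one_pow_mul_invSign_sort_compl_append hodd T.1 T.2]
  rw [Finset.sum_orderEmbOfFin T.1 T.2 fun x => (-1 : ℂ) ^ (x : ℕ) • basisVec (insert x T.1ᶜ)]

lemma phiVec_insert_compl {A : Finset (Fin (n + m))} {x : Fin (n + m)} (hx : x ∈ A) :
    phiVec (n := n) (m := m) (insert x Aᶜ) = basisVec (insert x Aᶜ) - ((-1 : ℂ) ^ (x : ℕ) • basisVec A
      + ∑ y ∈ Aᶜ, (-1 : ℂ) ^ (y : ℕ) • basisVec (insert y (A.erase x))) := by
  rw [phiVec, Finset.compl_insert, compl_compl, Finset.sum_insert (by simpa using hx),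
    Finset.insert_erase hx]

lemma sum_smul_phiVec_insert_compl (A : Finset (Fin (n + m))) :
    ∑ x ∈ A, (-1 : ℂ) ^ (x : ℕ) • phiVec (n := n) (m := m) (insert x Aᶜ)
      = ∑ x ∈ A, (-1 : ℂ) ^ (x : ℕ) • basisVec (insert x Aᶜ) - #A • basisVec A
        - ∑ x ∈ A, ∑ y ∈ Aᶜ, (-1 : ℂ) ^ ((x : ℕ) + y) • basisVec (insert y (A.erase x)) := by
  rw [← Finset.sum_const, ← Finset.sum_sub_distrib, ← Finset.sum_sub_distrib]
  refine Finset.sum_congr rfl fun x hx => ?_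
  rw [phiVec_insert_compl hx, smul_sub, smul_add, smul_smul, ← pow_add, ← two_mul, pow_mul,
    neg_one_sq, one_pow, one_smul, Finset.smul_sum]
  simp only [smul_smul, ← pow_add]
  abel

end Operators

section Factorization

variable {n m : ℕ} (h : n = m + 1)
include h

lemma phiLin_basisVec {A : Finset (Fin (n + m))} (hA : #A = n) :
    phiLin n m h (basisVec A) = phiVec A := by
  rw [show A = (⟨A, hA⟩ : Col n m).1 from rfl, basisVec_eq_single, ← phiBasis_eq_phiVec h]
  change phiFun h (Pi.single _ 1) = _
  simp [phiFun, Pi.single_apply]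

lemma card_insert_compl {A : Finset (Fin (n + m))} (hA : #A = n) {x : Fin (n + m)}
    (hx : x ∈ A) : #(insert x Aᶜ) = n := by
  rw [Finset.card_insert_of_notMem (by simpa using hx), Finset.card_compl, Fintype.card_fin]
  omega

lemma phiLin_phiVec {A : Finset (Fin (n + m))} (hA : #A = n) :
    phiLin n m h (phiVec A) = phiVec A - ∑ x ∈ A, (-1 : ℂ) ^ (x : ℕ) • phiVec (insert x Aᶜ) := by
  rw [phiVec, map_sub, map_sum, phiLin_basisVec h hA]
  congr 1
  refine Finset.sum_congr rfl fun x hx => ?_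
  rw [map_smul, phiLin_basisVec h (card_insert_compl h hA hx)]

lemma etaBasis_eq_phiLin_phiVec_sub (T : Col n m) :
    etaBasis T = phiLin n m h (phiVec T.1) - (2 : ℂ) • phiVec T.1 := by
  rw [phiLin_phiVec h T.2, sum_smul_phiVec_insert_compl, phiVec, etaBasis_eq_sum, T.2,
    ← Nat.cast_smul_eq_nsmul ℂ, show (n : ℂ) = m + 1 by exact_mod_cast h]
  module

theorem etaLin_eq_phiLin_comp :
    etaLin n m = phiLin n m h ∘ₗ (phiLin n m h - (2 : ℂ) • LinearMap.id) := by
  ext T : 2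
  simp only [LinearMap.comp_apply, LinearMap.coe_single, LinearMap.sub_apply, LinearMap.smul_apply,
    LinearMap.id_apply, ← basisVec_eq_single, etaLin_basisVec, map_sub, map_smul,
    phiLin_basisVec h T.2]
  exact etaBasis_eq_phiLin_phiVec_sub h T

end Factorization

/-- For the shape `(2^{n-1}, 1)` (i.e. `m = n - 1`,
`N = 2n - 1`), the image of `η` is contained in the image of `φ`. -/
theorem range_eta_le_range_phi (n : ℕ) (hn : 2 ≤ n) :
    LinearMap.range (etaLin n (n - 1)) ≤
      LinearMap.range (phiLin n (n - 1) (by omega)) := by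
  rw [etaLin_eq_phiLin_comp (by omega)]
  exact LinearMap.range_comp_le_range _ _
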